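/- Let A be a commutative semiring with idempotent addition (a + a = a for all a : A) which is multiplicatively cancellative by nonzero elements (for all x y z : A with z ≠ 0, x * z = y * z implies x = y). Then for all x y : A and every n : ℕ, one has (x + y)^n = x^n + y^n. -/

import Mathlib

open Finset

theorem Nat.cast_eq_one_of_one_add_one {R : Type*} [AddMonoidWithOne R] (h : (1 : R) + 1 = 1) :
    ∀ {n : ℕ}, n ≠ 0 → (n : R) = 1
  | 1, _ => Nat.cast_one
  | n + 2, _ => by
    rw [Nat.cast_add_one, Nat.cast_eq_one_of_one_add_one h n.succ_ne_zero, h]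

theorem add_pow_eq_sum_of_one_add_one {R : Type*} [CommSemiring R] (h : (1 : R) + 1 = 1)
    (x y : R) (n : ℕ) : (x + y) ^ n = ∑ k ∈ range (n + 1), x ^ k * y ^ (n - k) := by
  rw [add_pow]
  refine sum_congr rfl fun k hk => ?_
  rw [Nat.cast_eq_one_of_one_add_one h (Nat.choose_pos (mem_range_succ_iff.mp hk)).ne', mul_one]

theorem Finset.sum_add_sum_of_subset_of_add_self {ι M : Type*} [AddCommMonoid M]
    (h : ∀ a : M, a + a = a) {s t : Finset ι} (hst : s ⊆ t) (f : ι → M) :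
    ∑ i ∈ t, f i + ∑ i ∈ s, f i = ∑ i ∈ t, f i := by
  classical
  rw [← sum_sdiff hst, add_assoc, h]

theorem Finset.sum_union_of_add_self {ι M : Type*} [AddCommMonoid M] [DecidableEq ι]
    (h : ∀ a : M, a + a = a) (s t : Finset ι) (f : ι → M) :
    ∑ i ∈ s ∪ t, f i = ∑ i ∈ s, f i + ∑ i ∈ t, f i := by
  rw [← sum_union_inter, sum_add_sum_of_subset_of_add_self h inter_subset_union]

theorem eq_zero_of_add_eq_zero_of_add_self {M : Type*} [AddMonoid M] (h : ∀ a : M, a + a = a)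
    {a b : M} (hab : a + b = 0) : a = 0 := by
  calc a = a + (a + b) := by rw [hab, add_zero]
    _ = 0 := by rw [← add_assoc, h, hab]

/-- Both sides expand to `∑ j ≤ 2n, x ^ j * y ^ (2n - j)`: on the right, `y ^ n` contributes the
terms with `j ≤ n` and `x ^ n` those with `n ≤ j`, the overlap being absorbed by idempotency. -/
theorem add_pow_mul_add_pow_eq_of_add_self {R : Type*} [CommSemiring R] (h : ∀ a : R, a + a = a)
    (x y : R) (n : ℕ) : (x + y) ^ n * (x + y) ^ n = (x ^ n + y ^ n) * (x + y) ^ n := by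
  set f : ℕ → R := fun j => x ^ j * y ^ (n + n - j)
  have hx : x ^ n * (x + y) ^ n = ∑ j ∈ Ico n (n + n + 1), f j := by
    rw [add_pow_eq_sum_of_one_add_one (h 1), mul_sum, sum_Ico_eq_sum_range,
      show n + n + 1 - n = n + 1 by omega]
    refine sum_congr rfl fun k _ => ?_
    simp only [f, Nat.add_sub_add_left, pow_add, mul_assoc]
  have hy : y ^ n * (x + y) ^ n = ∑ j ∈ range (n + 1), f j := by
    rw [add_pow_eq_sum_of_one_add_one (h 1), mul_sum]
    refine sum_congr rfl fun k hk => ?_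
    simp only [f]
    rw [show n + n - k = n + (n - k) by have := mem_range_succ_iff.mp hk; omega, pow_add]
    ring
  calc (x + y) ^ n * (x + y) ^ n = ∑ j ∈ range (n + 1) ∪ Ico n (n + n + 1), f j := by
        rw [← pow_add, add_pow_eq_sum_of_one_add_one (h 1)]
        congr 1
        ext j
        simp only [mem_range, mem_union, mem_Ico]
        omega
    _ = (x ^ n + y ^ n) * (x + y) ^ n := by
        rw [sum_union_of_add_self h, add_mul, hx, hy, add_comm]

theorem freshman_dream_char_one {A : Type*} [CommSemiring A]
    (hidem : ∀ a : A, a + a = a)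
    (hcancel : ∀ x y z : A, z ≠ 0 → x * z = y * z → x = y) :
    ∀ (x y : A) (n : ℕ), (x + y) ^ n = x ^ n + y ^ n := by
  intro x y n
  by_cases hxy : x + y = 0
  · obtain rfl := eq_zero_of_add_eq_zero_of_add_self hidem hxy
    obtain rfl := eq_zero_of_add_eq_zero_of_add_self hidem ((add_comm y 0).trans hxy)
    rw [add_zero, hidem]
  · have : IsRightCancelMulZero A := ⟨fun hz _ _ h => hcancel _ _ _ hz h⟩
    exact mul_right_cancel₀ (pow_ne_zero n hxy) (add_pow_mul_add_pow_eq_of_add_self hidem x y n)
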